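/- arXiv:2207.03361 — 5 statements merged into one kernel-verified Lean document; each statement's English description precedes it below -/
import Mathlib

section
/- For every τ > 0, the function w ↦ f(w)/τ restricted to the domain [0,τ]^E is self-bounding: there exist functions g_e, each depending only on the coordinates other than e (one may take g_e(w^{(e)}) = f(w with w_e replaced by 0)/τ), such that for every w ∈ [0,τ]^E and every e ∈ E, 0 ≤ f(w)/τ − g_e(w^{(e)}) ≤ 1, and Σ_{e∈E} (f(w)/τ − g_e(w^{(e)})) ≤ f(w)/τ. -/
open Finset

/-- The optimum function `f(w) = max_{S ∈ 𝓕} Σ_{e ∈ S} w_e`. -/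
noncomputable def fopt {E : Type*} (𝓕 : Finset (Finset E)) (h𝓕 : 𝓕.Nonempty)
    (w : E → ℝ) : ℝ :=
  𝓕.sup' h𝓕 (fun S => ∑ e ∈ S, w e)

/-- For every `τ > 0`, the function `w ↦ f(w)/τ` restricted to `[0,τ]^E`
is self-bounding, witnessed by `g_e(w^{(e)}) = f(w with w_e replaced by 0)/τ`:
for every `w ∈ [0,τ]^E` and every `e`,
`0 ≤ f(w)/τ − f(update w e 0)/τ ≤ 1`, and
`Σ_e (f(w)/τ − f(update w e 0)/τ) ≤ f(w)/τ`. -/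
theorem fopt_self_bounding {E : Type*} [Fintype E] [Nonempty E] [DecidableEq E]
    (𝓕 : Finset (Finset E)) (h𝓕 : 𝓕.Nonempty)
    (hdc : ∀ S ∈ 𝓕, ∀ T ⊆ S, T ∈ 𝓕)
    (τ : ℝ) (hτ : 0 < τ)
    (w : E → ℝ) (hw : ∀ e, w e ∈ Set.Icc 0 τ) :
    (∀ e : E,
        0 ≤ fopt 𝓕 h𝓕 w / τ - fopt 𝓕 h𝓕 (Function.update w e 0) / τ ∧
        fopt 𝓕 h𝓕 w / τ - fopt 𝓕 h𝓕 (Function.update w e 0) / τ ≤ 1) ∧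
    ∑ e : E, (fopt 𝓕 h𝓕 w / τ - fopt 𝓕 h𝓕 (Function.update w e 0) / τ)
      ≤ fopt 𝓕 h𝓕 w / τ := by
  classical
  -- a maximizer S* for w
  obtain ⟨S, hS, hSval⟩ := Finset.exists_mem_eq_sup' h𝓕 (fun S => ∑ e ∈ S, w e)
  have hfw : fopt 𝓕 h𝓕 w = ∑ e ∈ S, w e := hSval
  -- monotonicity: fopt (update w e 0) ≤ fopt w
  have hmono : ∀ e : E, fopt 𝓕 h𝓕 (Function.update w e 0) ≤ fopt 𝓕 h𝓕 w := by
    intro e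
    apply Finset.sup'_le
    intro T hT
    refine le_trans ?_ (Finset.le_sup' (fun S => ∑ e ∈ S, w e) hT)
    apply Finset.sum_le_sum
    intro i _
    rcases eq_or_ne i e with rfl | h
    · simp [(hw i).1]
    · simp [Function.update_of_ne h]
  -- key bound: fopt w - fopt (update w e 0) ≤ w e, and = 0 if e ∉ S
  have hkey : ∀ e : E, fopt 𝓕 h𝓕 w - fopt 𝓕 h𝓕 (Function.update w e 0)
      ≤ if e ∈ S then w e else 0 := by
    intro e
    have hle : ∑ x ∈ S, Function.update w e 0 x ≤ fopt 𝓕 h𝓕 (Function.update w e 0) :=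
      Finset.le_sup' (fun T => ∑ x ∈ T, Function.update w e 0 x) hS
    by_cases he : e ∈ S
    · have hsum : ∑ x ∈ S, Function.update w e 0 x = ∑ x ∈ S.erase e, w x := by
        rw [Finset.sum_update_of_mem he]; simp [Finset.sdiff_singleton_eq_erase]
      have herase : ∑ x ∈ S.erase e, w x = ∑ x ∈ S, w x - w e := by
        rw [Finset.sum_erase_eq_sub he]
      simp only [he, if_true]
      have := hle
      rw [hsum, herase, ← hfw] at this
      linarith
    · have hsum : ∑ x ∈ S, Function.update w e 0 x = ∑ x ∈ S, w x := by
        apply Finset.sum_congr rfl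
        intro i hi
        exact Function.update_of_ne (by rintro rfl; exact he hi) 0 w
      simp only [he, if_false]
      rw [hsum, ← hfw] at hle
      linarith
  refine ⟨fun e => ?_, ?_⟩
  · constructor
    · have := hmono e
      have : fopt 𝓕 h𝓕 (Function.update w e 0) / τ ≤ fopt 𝓕 h𝓕 w / τ :=
        div_le_div_of_nonneg_right (hmono e) hτ.le
      linarith
    · rw [div_sub_div_same, div_le_one hτ]
      refine le_trans (hkey e) ?_
      by_cases he : e ∈ S
      · simpa [he] using (hw e).2
      · simp [he, hτ.le]
  · have hsum : ∑ e : E, (fopt 𝓕 h𝓕 w / τ - fopt 𝓕 h𝓕 (Function.update w e 0) / τ)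
        = (∑ e : E, (fopt 𝓕 h𝓕 w - fopt 𝓕 h𝓕 (Function.update w e 0))) / τ := by
      rw [Finset.sum_div]
      apply Finset.sum_congr rfl
      intro e _
      rw [div_sub_div_same]
    rw [hsum]
    apply div_le_div_of_nonneg_right ?_ hτ.le
    calc ∑ e : E, (fopt 𝓕 h𝓕 w - fopt 𝓕 h𝓕 (Function.update w e 0))
        ≤ ∑ e : E, (if e ∈ S then w e else 0) := Finset.sum_le_sum fun e _ => hkey e
      _ = ∑ e ∈ S, w e := by
          rw [Finset.sum_ite_mem, Finset.univ_inter]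
      _ = fopt 𝓕 h𝓕 w := hfw.symm
end

section
/- Let (w_e)_{e∈E} be mutually independent real-valued random variables indexed by a nonempty finite set E, let τ ∈ ℝ, and set γ := P[w_e ≤ τ for every e ∈ E]. If γ > 0, then the probability that there exists exactly one e ∈ E with w_e > τ is at least γ · log(1/γ). -/
open MeasureTheory ProbabilityTheory

/-! With `p e := P[w_e ≤ τ]`, independence gives `γ = ∏ₑ p e` and
`P[exactly one w_e > τ] = ∑ₑ (1 - p e) ∏_{f ≠ e} p f`. As `log (1/γ) = ∑ₑ log (1 / p e)`, the
inequality follows term by term from `p log (1/p) ≤ 1 - p`, which is `log x ≤ x - 1`. -/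

open Finset in
theorem Real.prod_mul_log_one_div_prod_le {ι : Type*} [DecidableEq ι] (s : Finset ι)
    {p : ι → ℝ} (hp : ∀ i ∈ s, 0 < p i) :
    (∏ i ∈ s, p i) * Real.log (1 / ∏ i ∈ s, p i) ≤
      ∑ i ∈ s, (1 - p i) * ∏ j ∈ s.erase i, p j := by
  have hlog : Real.log (1 / ∏ i ∈ s, p i) = ∑ i ∈ s, -Real.log (p i) := by
    rw [one_div, Real.log_inv, Real.log_prod fun i hi => (hp i hi).ne', sum_neg_distrib]
  rw [hlog, mul_sum]
  refine sum_le_sum fun i hi => ?_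
  have hrest : 0 ≤ ∏ j ∈ s.erase i, p j :=
    prod_nonneg fun j hj => (hp j (mem_of_mem_erase hj)).le
  have hpi : p i - 1 ≤ p i * Real.log (p i) := Real.self_sub_one_le_mul_log (hp i hi).le
  rw [← mul_prod_erase s p hi]
  linarith [mul_le_mul_of_nonneg_left hpi hrest]

section ExactlyOne

variable {Ω ι : Type*} [DecidableEq ι] {s : ι → Set Ω}

theorem Set.mem_iInter_update_compl_iff {i : ι} {ω : Ω} :
    ω ∈ ⋂ j, Function.update s i (s i)ᶜ j ↔ ω ∉ s i ∧ ∀ j ≠ i, ω ∈ s j := by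
  simp only [Set.mem_iInter]
  refine ⟨fun h => ⟨by simpa using h i, fun j hj => by simpa [hj] using h j⟩, fun h j => ?_⟩
  rcases eq_or_ne j i with rfl | hj
  · simpa using h.1
  · simpa [hj] using h.2 j hj

theorem Set.setOf_existsUnique_notMem_eq_iUnion :
    {ω | ∃! i, ω ∉ s i} = ⋃ i, ⋂ j, Function.update s i (s i)ᶜ j := by
  ext ω
  simp only [Set.mem_ofPred_eq, Set.mem_iUnion, Set.mem_iInter_update_compl_iff]
  exact exists_congr fun i => and_congr_right fun _ => forall_congr' fun j => by tauto

theorem Set.pairwise_disjoint_iInter_update_compl :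
    Pairwise (Function.onFun Disjoint fun i => ⋂ j, Function.update s i (s i)ᶜ j) := by
  intro i i' hii'
  refine Set.disjoint_left.2 fun ω hi hi' => ?_
  exact (Set.mem_iInter_update_compl_iff.1 hi).1 ((Set.mem_iInter_update_compl_iff.1 hi').2 i hii')

variable [MeasurableSpace Ω] {μ : Measure Ω} [Fintype ι]

theorem ProbabilityTheory.iIndepSet.measure_iInter_update_compl (hs : iIndepSet s μ) (i : ι) :
    μ (⋂ j, Function.update s i (s i)ᶜ j) = μ (s i)ᶜ * ∏ j ∈ Finset.univ.erase i, μ (s j) := by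
  have hgen : ∀ j, MeasurableSet[MeasurableSpace.generateFrom {s j}]
      (Function.update s i (s i)ᶜ j) := by
    intro j
    have hsj := MeasurableSpace.measurableSet_generateFrom (Set.mem_singleton (s j))
    rcases eq_or_ne j i with rfl | hj
    · simpa using hsj.compl
    · simpa [hj] using hsj
  rw [((iIndepSet_iff_iIndep _ _).1 hs).meas_iInter hgen,
    ← Finset.mul_prod_erase _ _ (Finset.mem_univ i), Function.update_self]
  congr 1
  exact Finset.prod_congr rfl fun j hj => by rw [Function.update_of_ne (Finset.ne_of_mem_erase hj)]

theorem ProbabilityTheory.iIndepSet.measureReal_existsUnique_notMem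
    (hs : iIndepSet s μ) (hms : ∀ i, MeasurableSet (s i)) :
    μ.real {ω | ∃! i, ω ∉ s i} =
      ∑ i, (1 - μ.real (s i)) * ∏ j ∈ Finset.univ.erase i, μ.real (s j) := by
  have := hs.isProbabilityMeasure
  have hmeas : ∀ i, MeasurableSet (⋂ j, Function.update s i (s i)ᶜ j) := fun i =>
    .iInter fun j => by
      rcases eq_or_ne j i with rfl | hj
      · simpa using (hms j).compl
      · simpa [hj] using hms j
  rw [Set.setOf_existsUnique_notMem_eq_iUnion,
    measureReal_iUnion_fintype Set.pairwise_disjoint_iInter_update_compl hmeas]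
  refine Finset.sum_congr rfl fun i _ => ?_
  rw [measureReal_def, hs.measure_iInter_update_compl, ENNReal.toReal_mul, ENNReal.toReal_prod,
    ← measureReal_def, probReal_compl_eq_one_sub (hms i)]
  rfl

end ExactlyOne

theorem prob_exactly_one_above_threshold_general
    {Ω : Type*} [MeasurableSpace Ω] (μ : Measure Ω)
    {E : Type*} [Fintype E]
    (w : E → Ω → ℝ) (hmeas : ∀ e, Measurable (w e))
    (hindep : iIndepFun w μ)
    (τ γ : ℝ) (hγ : γ = (μ {ω | ∀ e, w e ω ≤ τ}).toReal) (hγpos : 0 < γ) :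
    γ * Real.log (1 / γ) ≤ (μ {ω | ∃! e, τ < w e ω}).toReal := by
  classical
  set S : E → Set Ω := fun e => w e ⁻¹' Set.Iic τ
  have hS_meas : ∀ e, MeasurableSet (S e) := fun e => hmeas e measurableSet_Iic
  have hS_comap : ∀ e, MeasurableSet[MeasurableSpace.comap (w e) inferInstance] (S e) :=
    fun e => ⟨Set.Iic τ, measurableSet_Iic, rfl⟩
  have hS : iIndepSet S μ := hindep.iIndep.iIndepSets'.iIndepSet_of_mem hS_comap hS_meas
  have hγ_prod : γ = ∏ e, μ.real (S e) := by
    have hinter : {ω | ∀ e, w e ω ≤ τ} = ⋂ e, S e := by ext ω; simp [S]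
    rw [hγ, hinter, hindep.meas_iInter hS_comap, ENNReal.toReal_prod]
    rfl
  have hS_pos : ∀ e ∈ Finset.univ, 0 < μ.real (S e) := fun e he =>
    measureReal_nonneg.lt_of_ne' (Finset.prod_ne_zero_iff.1 (hγ_prod ▸ hγpos.ne') e he)
  have hevent : {ω | ∃! e, τ < w e ω} = {ω | ∃! e, ω ∉ S e} := by simp [S]
  rw [hevent, ← measureReal_def, hS.measureReal_existsUnique_notMem hS_meas, hγ_prod]
  exact Real.prod_mul_log_one_div_prod_le Finset.univ hS_pos

/-- Let `(w_e)` be mutually independent real random variables indexed by a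
nonempty finite set, `τ ∈ ℝ`, and `γ := P[∀ e, w_e ≤ τ]`. If `γ > 0`, then the probability
that there exists exactly one `e` with `w_e > τ` is at least `γ · log(1/γ)`. -/
theorem prob_exactly_one_above_threshold
    {Ω : Type*} [MeasurableSpace Ω] (μ : Measure Ω) [IsProbabilityMeasure μ]
    {E : Type*} [Fintype E] [Nonempty E]
    (w : E → Ω → ℝ) (hmeas : ∀ e, Measurable (w e))
    (hindep : iIndepFun w μ)
    (τ γ : ℝ) (hγ : γ = (μ {ω | ∀ e, w e ω ≤ τ}).toReal) (hγpos : 0 < γ) :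
    γ * Real.log (1 / γ) ≤ (μ {ω | ∃! e, τ < w e ω}).toReal :=
  prob_exactly_one_above_threshold_general μ w hmeas hindep τ γ hγ hγpos
end

section
/- Let τ > 0 and let (w_e)_{e∈E} be mutually independent random variables with w_e ∈ [0,τ] almost surely for every e ∈ E, and set W := E[f(w)]. Let δ > 1, k ≥ 1, α ∈ (0,1], and c ≥ ((4 + 2δ)/(3(δ − 1)²)) · log(k/α). If W > c·τ, then P[f(w) > δW] ≤ α/k. -/
/-!
Clamped to `[0, τ]` and divided by `τ`, the optimum `Z = f(w) / τ` is a self-bounding function of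
the independent weights: zeroing one weight lowers `Z` by at most one, and these decrements add up
to at most `Z`, since each is at most the zeroed weight's share in an optimal set.
The entropy method turns this into a Bennett-type tail bound. Tensorization of entropy and a
convexity estimate in one coordinate give the modified logarithmic Sobolev inequality
`Ent(e^{λZ}) ≤ (e^{-λ} - 1 + λ) E[Z e^{λZ}]`; Herbst's argument integrates it to
`log E[e^{λZ}] ≤ (e^λ - 1) E[Z]`, and Chernoff's bound at `λ = log δ` gives
`P(Z ≥ δ E[Z]) ≤ exp(-(δ log δ - δ + 1) E[Z])`. It remains to use
`δ log δ - δ + 1 ≥ 3 (δ - 1)² / (4 + 2δ)` and `E[Z] = W / τ > c`.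
-/

open MeasureTheory ProbabilityTheory Finset

open Real Function

lemma mul_le_mul_log_sub_add_exp {x : ℝ} (hx : 0 < x) (y : ℝ) :
    x * y ≤ x * log x - x + exp y := by
  have h := mul_le_mul_of_nonneg_left (add_one_le_exp (y - log x)) hx.le
  rw [exp_sub, exp_log hx, mul_div_cancel₀ _ hx.ne'] at h
  linarith

lemma exp_mul_le_one_sub_add_mul_exp {x : ℝ} (h0 : 0 ≤ x) (h1 : x ≤ 1) (t : ℝ) :
    exp (x * t) ≤ 1 - x + x * exp t := by
  simpa [smul_eq_mul] using
    convexOn_exp.2 (Set.mem_univ 0) (Set.mem_univ t) (sub_nonneg.2 h1) h0 (by ring)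

-- the left side `q u` is the rational function with `(1 + u) q u - u = 3 u² / (6 + 2 u)`
lemma div_le_log_one_add {u : ℝ} (hu : 0 ≤ u) :
    u * (5 * u + 6) / (2 * (1 + u) * (3 + u)) ≤ log (1 + u) := by
  let q : ℝ → ℝ := fun v => log (1 + v) - v * (5 * v + 6) / (2 * (1 + v) * (3 + v))
  have hq : ∀ v, 0 ≤ v → HasDerivAt q (v ^ 3 / ((1 + v) ^ 2 * (3 + v) ^ 2)) v := by
    intro v hv
    have h1 : 0 < 1 + v := by linarith
    have h3 : 0 < 3 + v := by linarith
    have := (((hasDerivAt_id' v).const_add 1).log h1.ne').sub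
      (((hasDerivAt_id' v).mul (((hasDerivAt_id' v).const_mul 5).add_const 6)).div
        ((((hasDerivAt_id' v).const_add 1).const_mul 2).mul ((hasDerivAt_id' v).const_add 3))
        (mul_pos (by linarith) h3).ne')
    refine this.congr_deriv ?_
    simp only [Pi.mul_apply]
    field_simp
    ring
  have hmono : MonotoneOn q (Set.Ici 0) := by
    refine monotoneOn_of_deriv_nonneg (convex_Ici 0)
      (fun v hv => (hq v hv).continuousAt.continuousWithinAt) (fun v hv => ?_) (fun v hv => ?_)
    all_goals rw [interior_Ici] at hv
    · exact (hq v hv.le).differentiableAt.differentiableWithinAt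
    · rw [(hq v hv.le).deriv]; exact div_nonneg (pow_nonneg hv.le 3) (by positivity)
  have := hmono Set.self_mem_Ici hu hu
  simp only [q] at this
  norm_num at this
  linarith

lemma div_le_mul_log_sub_add_one {δ : ℝ} (hδ : 1 ≤ δ) :
    3 * (δ - 1) ^ 2 / (4 + 2 * δ) ≤ δ * log δ - δ + 1 := by
  have hδ0 : 0 < δ := by linarith
  have h := mul_le_mul_of_nonneg_left (div_le_log_one_add (sub_nonneg.2 hδ)) hδ0.le
  rw [add_sub_cancel] at h
  have key : δ * ((δ - 1) * (5 * (δ - 1) + 6) / (2 * δ * (3 + (δ - 1)))) - δ + 1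
      = 3 * (δ - 1) ^ 2 / (4 + 2 * δ) := by
    have : 3 + (δ - 1) ≠ 0 := by linarith
    have : 4 + 2 * δ ≠ 0 := by linarith
    field_simp
    ring
  linarith

section Entropy

variable {X Y : Type*} [MeasurableSpace X] [MeasurableSpace Y] {a b : ℝ}

lemma integrable_comp_of_mem_Icc (ρ : Measure X) [IsFiniteMeasure ρ] {φ : ℝ → ℝ}
    (hφ : Continuous φ) {g : X → ℝ} (hg : Measurable g) (hgab : ∀ x, g x ∈ Set.Icc a b) :
    Integrable (fun x => φ (g x)) ρ := by
  obtain ⟨C, hC⟩ := isCompact_Icc.exists_bound_of_continuousOn hφ.continuousOn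
  exact .of_bound (hφ.measurable.comp hg).aestronglyMeasurable C
    (ae_of_all _ fun x => hC _ (hgab x))

lemma integral_mem_Icc (ρ : Measure X) [IsProbabilityMeasure ρ] {g : X → ℝ} (hg : Measurable g)
    (hgab : ∀ x, g x ∈ Set.Icc a b) : ∫ x, g x ∂ρ ∈ Set.Icc a b :=
  (convex_Icc a b).integral_mem isClosed_Icc (ae_of_all _ hgab)
    (integrable_comp_of_mem_Icc ρ continuous_id hg hgab)

noncomputable def ent (ρ : Measure X) (g : X → ℝ) : ℝ :=
  ∫ x, g x * log (g x) ∂ρ - (∫ x, g x ∂ρ) * log (∫ x, g x ∂ρ)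

lemma ent_const (ρ : Measure X) [IsProbabilityMeasure ρ] (c : ℝ) : ent ρ (fun _ => c) = 0 := by
  simp [ent]

lemma MeasureTheory.MeasurePreserving.ent_comp {ρ : Measure X} {μ : Measure Y} {e : Y ≃ᵐ X}
    (he : MeasurePreserving e μ ρ) (g : X → ℝ) : ent μ (fun y => g (e y)) = ent ρ g := by
  simp only [ent, he.integral_comp' g, he.integral_comp' fun x => g x * log (g x)]

lemma measurable_ent_section (ρ : Measure X) [SFinite ρ] {g : Y × X → ℝ} (hg : Measurable g) :
    Measurable fun y => ent ρ fun x => g (y, x) := by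
  have hm := hg.stronglyMeasurable.integral_prod_right' (ν := ρ)
  exact ((hg.mul hg.log).stronglyMeasurable.integral_prod_right' (ν := ρ)).measurable.sub
    (hm.measurable.mul hm.measurable.log)

lemma integrable_ent_section (μ : Measure Y) [IsFiniteMeasure μ] (ρ : Measure X)
    [IsProbabilityMeasure ρ] {g : Y × X → ℝ} (hg : Measurable g)
    (hgab : ∀ p, g p ∈ Set.Icc a b) : Integrable (fun y => ent ρ fun x => g (y, x)) μ := by
  obtain ⟨C, hC⟩ := isCompact_Icc.exists_bound_of_continuousOn
    (continuous_mul_log.continuousOn (s := Set.Icc a b))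
  refine .of_bound (measurable_ent_section ρ hg).aestronglyMeasurable (C + C)
    (ae_of_all _ fun y => ?_)
  have h1 : ‖∫ x, g (y, x) * log (g (y, x)) ∂ρ‖ ≤ C := by
    simpa using norm_integral_le_of_norm_le_const (μ := ρ) (ae_of_all _ fun x => hC _ (hgab _))
  have h2 := hC _ (integral_mem_Icc ρ (hg.comp measurable_prodMk_left) fun x => hgab (y, x))
  exact (norm_sub_le _ _).trans (add_le_add h1 h2)

section ProbabilityMeasure

variable (ρ : Measure X) [IsProbabilityMeasure ρ] {g : X → ℝ}

lemma integral_mul_log_sub_add (hg : Measurable g) (hgab : ∀ x, g x ∈ Set.Icc a b) (s : ℝ) :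
    ∫ x, (g x * log (g x) - g x * log s - g x + s) ∂ρ
      = ∫ x, g x * log (g x) ∂ρ - (∫ x, g x ∂ρ) * log s - ∫ x, g x ∂ρ + s := by
  have h1 : Integrable g ρ := integrable_comp_of_mem_Icc ρ continuous_id hg hgab
  have h2 : Integrable (fun x => g x * log (g x)) ρ :=
    integrable_comp_of_mem_Icc ρ continuous_mul_log hg hgab
  have h3 : Integrable (fun x => g x * log (g x) - g x * log s) ρ := h2.sub (h1.mul_const _)
  have h4 : Integrable (fun x => g x * log (g x) - g x * log s - g x) ρ := h3.sub h1
  rw [integral_add h4 (integrable_const s), integral_sub h3 h1,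
    integral_sub h2 (h1.mul_const _), integral_mul_const, integral_const]
  simp

lemma ent_le_integral (hg : Measurable g) (ha : 0 < a) (hgab : ∀ x, g x ∈ Set.Icc a b)
    {s : ℝ} (hs : 0 < s) : ent ρ g ≤ ∫ x, (g x * log (g x) - g x * log s - g x + s) ∂ρ := by
  have hm := ha.trans_le (integral_mem_Icc ρ hg hgab).1
  have := mul_le_mul_log_sub_add_exp hm (log s)
  rw [exp_log hs] at this
  rw [integral_mul_log_sub_add ρ hg hgab, ent]
  linarith

lemma integral_mul_le_ent (hg : Measurable g) (ha : 0 < a) (hgab : ∀ x, g x ∈ Set.Icc a b)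
    {u : X → ℝ} (hu : Measurable u) {c d : ℝ} (hucd : ∀ x, u x ∈ Set.Icc c d)
    (hexp : ∫ x, exp (u x) ∂ρ ≤ 1) : ∫ x, g x * u x ∂ρ ≤ ent ρ g := by
  set m := ∫ x, g x ∂ρ
  have hm : 0 < m := ha.trans_le (integral_mem_Icc ρ hg hgab).1
  have hpt : ∀ x, g x * u x
      ≤ (g x * log (g x) - g x * log m - g x + m) + m * (exp (u x) - 1) := fun x => by
    have hgx : 0 < g x := ha.trans_le (hgab x).1
    have := mul_le_mul_of_nonneg_left (mul_le_mul_log_sub_add_exp (div_pos hgx hm) (u x)) hm.le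
    rw [log_div hgx.ne' hm.ne'] at this
    field_simp at this
    linarith
  have hψ : Integrable (fun x => g x * log (g x) - g x * log m - g x + m) ρ :=
    integrable_comp_of_mem_Icc ρ (φ := fun y => y * log y - y * log m - y + m) (by fun_prop) hg hgab
  have hexp' : Integrable (fun x => m * (exp (u x) - 1)) ρ :=
    ((integrable_comp_of_mem_Icc ρ continuous_exp hu hucd).sub (integrable_const 1)).const_mul m
  have hgu : Integrable (fun x => g x * u x) ρ :=
    (integrable_comp_of_mem_Icc ρ continuous_id hu hucd).bdd_mul (c := b) hg.aestronglyMeasurable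
      (ae_of_all _ fun x => abs_le.2 ⟨by linarith [(hgab x).1, (hgab x).2, ha], (hgab x).2⟩)
  calc ∫ x, g x * u x ∂ρ
      ≤ ∫ x, ((g x * log (g x) - g x * log m - g x + m) + m * (exp (u x) - 1)) ∂ρ :=
        integral_mono hgu (hψ.add hexp') hpt
    _ = ent ρ g + m * (∫ x, exp (u x) ∂ρ - 1) := by
        rw [integral_add hψ hexp', integral_mul_log_sub_add ρ hg hgab, integral_const_mul,
          integral_sub (integrable_comp_of_mem_Icc ρ continuous_exp hu hucd) (integrable_const 1)]
        simp [ent, m]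
    _ ≤ ent ρ g := by nlinarith

end ProbabilityMeasure

section Product

variable (μ : Measure X) (ν : Measure Y) [IsProbabilityMeasure μ] [IsProbabilityMeasure ν]
  {g : X × Y → ℝ}

lemma ent_prod (hg : Measurable g) (hgab : ∀ p, g p ∈ Set.Icc a b) :
    ent (μ.prod ν) g = ∫ y, ent μ (fun x => g (x, y)) ∂ν + ent ν (fun y => ∫ x, g (x, y) ∂μ) := by
  have h1 : Integrable g (μ.prod ν) := integrable_comp_of_mem_Icc _ continuous_id hg hgab
  have h2 : Integrable (fun p => g p * log (g p)) (μ.prod ν) :=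
    integrable_comp_of_mem_Icc _ continuous_mul_log hg hgab
  have h3 := integrable_comp_of_mem_Icc ν continuous_mul_log
    hg.stronglyMeasurable.integral_prod_left'.measurable
    fun y => integral_mem_Icc μ (hg.comp measurable_prodMk_right) fun x => hgab (x, y)
  simp only [ent]
  rw [integral_prod_symm _ h1, integral_prod_symm _ h2, integral_sub h2.integral_prod_right h3]
  ring

lemma ent_integral_le (hg : Measurable g) (ha : 0 < a) (hgab : ∀ p, g p ∈ Set.Icc a b) :
    ent ν (fun y => ∫ x, g (x, y) ∂μ) ≤ ∫ x, ent ν (fun y => g (x, y)) ∂μ := by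
  set h : Y → ℝ := fun y => ∫ x, g (x, y) ∂μ
  have hh : Measurable h := hg.stronglyMeasurable.integral_prod_left'.measurable
  have hhab : ∀ y, h y ∈ Set.Icc a b := fun y =>
    integral_mem_Icc μ (hg.comp measurable_prodMk_right) fun x => hgab (x, y)
  set M := ∫ y, h y ∂ν
  have hM : M ∈ Set.Icc a b := integral_mem_Icc ν hh hhab
  have hM0 : 0 < M := ha.trans_le hM.1
  -- `u = log (h / E h)` is the optimal dual variable for `h`
  set u : Y → ℝ := fun y => log (h y) - log M
  have hu : Measurable u := hh.log.sub measurable_const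
  have hucd : ∀ y, u y ∈ Set.Icc (log a - log b) (log b - log a) := fun y => by
    have := log_le_log ha (hhab y).1
    have := log_le_log (ha.trans_le (hhab y).1) (hhab y).2
    have := log_le_log ha hM.1
    have := log_le_log hM0 hM.2
    constructor <;> simp only [u] <;> linarith
  have hexp : ∫ y, exp (u y) ∂ν = 1 := by
    simp only [u, exp_sub, exp_log hM0, exp_log (ha.trans_le (hhab _).1)]
    rw [integral_div, div_self hM0.ne']
  have hent : ent ν h = ∫ y, h y * u y ∂ν := by
    simp only [u, mul_sub]
    have h1 : Integrable (fun y => h y * log (h y)) ν :=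
      integrable_comp_of_mem_Icc ν continuous_mul_log hh hhab
    have h2 : Integrable h ν := integrable_comp_of_mem_Icc ν continuous_id hh hhab
    rw [integral_sub h1 (h2.mul_const _), integral_mul_const, ent]
  have hgu : Integrable (fun p : X × Y => g p * u p.2) (μ.prod ν) :=
    (integrable_comp_of_mem_Icc _ continuous_id (hu.comp measurable_snd) fun p => hucd p.2).bdd_mul
      (c := b) hg.aestronglyMeasurable
      (ae_of_all _ fun p => abs_le.2 ⟨by linarith [(hgab p).1, (hgab p).2], (hgab p).2⟩)
  calc ent ν h = ∫ y, h y * u y ∂ν := hent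
    _ = ∫ y, ∫ x, g (x, y) * u y ∂μ ∂ν := by simp only [h, integral_mul_const]
    _ = ∫ x, ∫ y, g (x, y) * u y ∂ν ∂μ := (integral_integral_swap hgu).symm
    _ ≤ ∫ x, ent ν (fun y => g (x, y)) ∂μ :=
        integral_mono hgu.integral_prod_left (integrable_ent_section μ ν hg hgab) fun x =>
          integral_mul_le_ent ν (hg.comp measurable_prodMk_left) ha (fun y => hgab _) hu hucd
            hexp.le

lemma ent_prod_le (hg : Measurable g) (ha : 0 < a) (hgab : ∀ p, g p ∈ Set.Icc a b) :
    ent (μ.prod ν) g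
      ≤ ∫ y, ent μ (fun x => g (x, y)) ∂ν + ∫ x, ent ν (fun y => g (x, y)) ∂μ := by
  rw [ent_prod μ ν hg hgab]
  exact add_le_add_right (ent_integral_le μ ν hg ha hgab) _

end Product

lemma integral_pi_fin_succ {n : ℕ} (ν : Fin (n + 1) → Measure X) [∀ i, SigmaFinite (ν i)]
    {F : (Fin (n + 1) → X) → ℝ} (hF : Integrable F (Measure.pi ν)) :
    ∫ x, F x ∂Measure.pi ν = ∫ x, ∫ z, F (Fin.cons x z) ∂Measure.pi (fun j => ν j.succ) ∂ν 0 := by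
  have he := (measurePreserving_piFinSuccAbove ν 0).symm
  simp only [Fin.succAbove_zero] at he
  have hFe : Integrable (fun p => F ((MeasurableEquiv.piFinSuccAbove (fun _ => X) 0).symm p))
      ((ν 0).prod (Measure.pi fun j => ν j.succ)) :=
    (he.integrable_comp_emb (MeasurableEquiv.measurableEmbedding _)).2 hF
  rw [← he.integral_comp' F, integral_prod _ hFe]
  simp [MeasurableEquiv.piFinSuccAbove_symm_apply, Fin.insertNthEquiv, Fin.insertNth_zero']

theorem ent_pi_fin_le_sum (ha : 0 < a) : ∀ {n : ℕ} (ν : Fin n → Measure X)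
    [∀ i, IsProbabilityMeasure (ν i)] {g : (Fin n → X) → ℝ}, Measurable g →
    (∀ x, g x ∈ Set.Icc a b) →
    ent (Measure.pi ν) g ≤ ∑ i, ∫ x, ent (ν i) (fun y => g (update x i y)) ∂Measure.pi ν
  | 0, ν, _, g, _, _ => by
    rw [show g = fun _ => g default from funext fun x => congrArg g (Subsingleton.elim x _),
      ent_const]
    simp
  | n + 1, ν, _, g, hg, hgab => by
    set P := Measure.pi fun j : Fin n => ν j.succ
    set e := (MeasurableEquiv.piFinSuccAbove (fun _ => X) 0).symm
    have he : MeasurePreserving e ((ν 0).prod P) (Measure.pi ν) := by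
      simpa only [Fin.succAbove_zero] using (measurePreserving_piFinSuccAbove ν 0).symm
    have he_apply : ∀ p, e p = Fin.cons p.1 p.2 := fun p => by
      simp [e, MeasurableEquiv.piFinSuccAbove_symm_apply, Fin.insertNthEquiv, Fin.insertNth_zero']
    set G : X × (Fin n → X) → ℝ := fun p => g (e p)
    have hG : Measurable G := hg.comp e.measurable
    have hterm : ∀ i, Integrable (fun x => ent (ν i) fun y => g (update x i y)) (Measure.pi ν) :=
      fun i => integrable_ent_section _ _ (hg.comp measurable_update') fun _ => hgab _
    have hterm' : ∀ j : Fin n, Integrable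
        (fun p : X × (Fin n → X) => ent (ν j.succ) fun y => G (p.1, update p.2 j y))
        ((ν 0).prod P) := fun j =>
      integrable_ent_section _ _ (hG.comp ((measurable_fst.comp measurable_fst).prodMk
        (measurable_update'.comp ((measurable_snd.comp measurable_fst).prodMk measurable_snd))))
        fun _ => hgab _
    calc ent (Measure.pi ν) g = ent ((ν 0).prod P) G := (he.ent_comp g).symm
      _ ≤ ∫ z, ent (ν 0) (fun x => G (x, z)) ∂P + ∫ x, ent P (fun z => G (x, z)) ∂ν 0 :=
          ent_prod_le _ _ hG ha fun _ => hgab _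
      _ ≤ ∫ z, ent (ν 0) (fun x => G (x, z)) ∂P
            + ∫ x, ∑ j, ∫ z, ent (ν j.succ) (fun y => G (x, update z j y)) ∂P ∂ν 0 := by
          refine add_le_add le_rfl (integral_mono (integrable_ent_section _ _ hG fun _ => hgab _)
            (integrable_finsetSum _ fun j _ => (hterm' j).integral_prod_left) fun x => ?_)
          exact ent_pi_fin_le_sum ha _ (hG.comp measurable_prodMk_left) fun _ => hgab _
      _ = ∑ i, ∫ x, ent (ν i) (fun y => g (update x i y)) ∂Measure.pi ν := by
          rw [Fin.sum_univ_succ, integral_finsetSum _ fun j _ => (hterm' j).integral_prod_left,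
            integral_pi_fin_succ ν (hterm 0)]
          simp [P, G, he_apply, integral_pi_fin_succ ν (hterm _), Fin.update_cons_zero,
            ← Fin.cons_update]

lemma piCongrLeft_update {ι κ : Type*} [DecidableEq ι] [DecidableEq κ] (σ : κ ≃ ι)
    (x : κ → X) (j : κ) (y : X) :
    MeasurableEquiv.piCongrLeft (fun _ => X) σ (update x j y)
      = update (MeasurableEquiv.piCongrLeft (fun _ => X) σ x) (σ j) y := by
  ext i
  obtain ⟨k, rfl⟩ := σ.surjective i
  simp [MeasurableEquiv.coe_piCongrLeft, update_apply]

theorem ent_pi_le_sum {ι : Type*} [Fintype ι] [DecidableEq ι] (ν : ι → Measure X)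
    [∀ i, IsProbabilityMeasure (ν i)] {g : (ι → X) → ℝ} (hg : Measurable g) (ha : 0 < a)
    (hgab : ∀ x, g x ∈ Set.Icc a b) :
    ent (Measure.pi ν) g ≤ ∑ i, ∫ x, ent (ν i) (fun y => g (update x i y)) ∂Measure.pi ν := by
  set σ := (Fintype.equivFin ι).symm
  set T := MeasurableEquiv.piCongrLeft (fun _ => X) σ
  have hT : MeasurePreserving T (Measure.pi fun j => ν (σ j)) (Measure.pi ν) :=
    measurePreserving_piCongrLeft ν σ
  calc ent (Measure.pi ν) g = ent (Measure.pi fun j => ν (σ j)) (fun x => g (T x)) :=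
        (hT.ent_comp g).symm
    _ ≤ ∑ j, ∫ x, ent (ν (σ j)) (fun y => g (T (update x j y))) ∂Measure.pi fun j => ν (σ j) :=
        ent_pi_fin_le_sum ha _ (hg.comp T.measurable) fun _ => hgab _
    _ = ∑ i, ∫ x, ent (ν i) (fun y => g (update x i y)) ∂Measure.pi ν := by
        simp only [T, piCongrLeft_update]
        rw [← σ.sum_comp]
        exact Finset.sum_congr rfl fun j _ =>
          hT.integral_comp' (fun x => ent (ν (σ j)) fun y => g (update x (σ j) y))

end Entropy

section Resampling

variable {ι X : Type*} [Fintype ι] [DecidableEq ι] [MeasurableSpace X]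

lemma measurePreserving_update (ν : ι → Measure X) [∀ i, IsProbabilityMeasure (ν i)] (i : ι) :
    MeasurePreserving (fun p : (ι → X) × X => update p.1 i p.2)
      ((Measure.pi ν).prod (ν i)) (Measure.pi ν) := by
  refine ⟨measurable_update', (Measure.pi_eq fun s hs => ?_).symm⟩
  have hpre : (fun p : (ι → X) × X => update p.1 i p.2) ⁻¹' Set.univ.pi s
      = Set.univ.pi (update s i Set.univ) ×ˢ s i := by
    ext ⟨x, y⟩
    simp only [Set.mem_preimage, Set.mem_univ_pi, Set.mem_prod]
    constructor
    · intro h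
      refine ⟨fun j => ?_, by simpa using h i⟩
      by_cases hj : j = i
      · subst hj; simp
      · simpa [hj] using h j
    · rintro ⟨h, hy⟩ j
      by_cases hj : j = i
      · subst hj; simpa using hy
      · simpa [hj] using h j
  rw [Measure.map_apply measurable_update' (.univ_pi hs), hpre, Measure.prod_prod, Measure.pi_pi,
    ← Finset.prod_erase_mul _ _ (Finset.mem_univ i), ← Finset.prod_erase_mul _ _ (Finset.mem_univ i)]
  simp only [update_self, measure_univ, mul_one]
  congr 1
  exact Finset.prod_congr rfl fun j hj => by simp [Finset.ne_of_mem_erase hj]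

lemma integral_integral_update (ν : ι → Measure X) [∀ i, IsProbabilityMeasure (ν i)] (i : ι)
    {F : (ι → X) → ℝ} (hF : Integrable F (Measure.pi ν)) :
    ∫ x, ∫ y, F (update x i y) ∂ν i ∂Measure.pi ν = ∫ x, F x ∂Measure.pi ν := by
  have h := measurePreserving_update ν i
  rw [← integral_prod (fun p : (ι → X) × X => F (update p.1 i p.2))
    ((h.integrable_comp hF.aestronglyMeasurable).2 hF)]
  conv_rhs => rw [← h.map_eq]
  exact (integral_map h.measurable.aemeasurable (by rw [h.map_eq]; exact hF.aestronglyMeasurable)).symm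

lemma integrable_integral_update (ν : ι → Measure X) [∀ i, IsProbabilityMeasure (ν i)] (i : ι)
    {F : (ι → X) → ℝ} (hF : Integrable F (Measure.pi ν)) :
    Integrable (fun x => ∫ y, F (update x i y) ∂ν i) (Measure.pi ν) :=
  ((measurePreserving_update ν i).integrable_comp hF.aestronglyMeasurable |>.2 hF).integral_prod_left

end Resampling

lemma ent_exp_le_of_sub_mem_Icc {X : Type*} [MeasurableSpace X] (ρ : Measure X)
    [IsProbabilityMeasure ρ] {V : X → ℝ} (hV : Measurable V) {s : ℝ}
    (hs : ∀ y, V y - s ∈ Set.Icc 0 1) {l : ℝ} (hl : 0 < l) :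
    ent ρ (fun y => exp (l * V y)) ≤ (exp (-l) - 1 + l) * ∫ y, (V y - s) * exp (l * V y) ∂ρ := by
  have hVs : ∀ y, V y ∈ Set.Icc s (s + 1) := fun y =>
    ⟨by linarith [(hs y).1], by linarith [(hs y).2]⟩
  have hG : ∀ y, exp (l * V y) ∈ Set.Icc (exp (l * s)) (exp (l * (s + 1))) := fun y =>
    ⟨exp_le_exp.2 (mul_le_mul_of_nonneg_left (hVs y).1 hl.le),
      exp_le_exp.2 (mul_le_mul_of_nonneg_left (hVs y).2 hl.le)⟩
  have hGm : Measurable fun y => exp (l * V y) := (hV.const_mul l).exp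
  have hpt : ∀ y, exp (l * V y) * log (exp (l * V y)) - exp (l * V y) * log (exp (l * s))
      - exp (l * V y) + exp (l * s) ≤ (exp (-l) - 1 + l) * ((V y - s) * exp (l * V y)) := by
    intro y
    -- with `d = V y - s ∈ [0, 1]`, this is `exp (-l d) ≤ 1 - d + d exp (-l)` times `exp (l V y)`
    have hconv := exp_mul_le_one_sub_add_mul_exp (hs y).1 (hs y).2 (-l)
    have hsplit : exp (l * s) = exp (l * V y) * exp ((V y - s) * -l) := by
      rw [← exp_add]; ring_nf
    rw [log_exp, log_exp, hsplit]
    nlinarith [mul_le_mul_of_nonneg_left hconv (exp_pos (l * V y)).le]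
  calc ent ρ (fun y => exp (l * V y))
      ≤ ∫ y, (exp (l * V y) * log (exp (l * V y)) - exp (l * V y) * log (exp (l * s))
          - exp (l * V y) + exp (l * s)) ∂ρ := ent_le_integral ρ hGm (exp_pos _) hG (exp_pos _)
    _ ≤ ∫ y, (exp (-l) - 1 + l) * ((V y - s) * exp (l * V y)) ∂ρ :=
        integral_mono (integrable_comp_of_mem_Icc ρ
            (φ := fun z => z * log z - z * log (exp (l * s)) - z + exp (l * s)) (by fun_prop) hGm hG)
          ((integrable_comp_of_mem_Icc ρ (φ := fun v => (v - s) * exp (l * v)) (by fun_prop) hV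
            hVs).const_mul _) hpt
    _ = (exp (-l) - 1 + l) * ∫ y, (V y - s) * exp (l * V y) ∂ρ := integral_const_mul _ _

section SelfBounding

variable {ι X : Type*} [Fintype ι] [DecidableEq ι]

/-- `Z` is self-bounding in the sense of Boucheron, Lugosi and Massart, with the functions
`Z_i x = Z (update x i x₀)` of the remaining coordinates. -/
structure IsSelfBounding (Z : (ι → X) → ℝ) (x₀ : X) : Prop where
  update_le : ∀ x i, Z (update x i x₀) ≤ Z x
  le_update_add_one : ∀ x i, Z x ≤ Z (update x i x₀) + 1
  sum_sub_update_le : ∀ x, ∑ i, (Z x - Z (update x i x₀)) ≤ Z x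

namespace IsSelfBounding

variable {Z : (ι → X) → ℝ} {x₀ : X}

lemma sub_update_mem_Icc (hZ : IsSelfBounding Z x₀) (x : ι → X) (i : ι) :
    Z x - Z (update x i x₀) ∈ Set.Icc 0 1 :=
  ⟨sub_nonneg.2 (hZ.update_le x i), by linarith [hZ.le_update_add_one x i]⟩

lemma nonneg (hZ : IsSelfBounding Z x₀) (x : ι → X) : 0 ≤ Z x :=
  (Finset.sum_nonneg fun i _ => (hZ.sub_update_mem_Icc x i).1).trans (hZ.sum_sub_update_le x)

variable [MeasurableSpace X] {l : ℝ}

lemma ent_exp_update_le (hZ : IsSelfBounding Z x₀) (hZm : Measurable Z) (ρ : Measure X)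
    [IsProbabilityMeasure ρ] (x : ι → X) (i : ι) (hl : 0 < l) :
    ent ρ (fun y => exp (l * Z (update x i y))) ≤ (exp (-l) - 1 + l)
      * ∫ y, (Z (update x i y) - Z (update x i x₀)) * exp (l * Z (update x i y)) ∂ρ :=
  ent_exp_le_of_sub_mem_Icc ρ (V := fun y => Z (update x i y)) (hZm.comp (measurable_update x))
    (fun y => by simpa only [update_idem] using hZ.sub_update_mem_Icc (update x i y) i) hl

theorem ent_exp_le (hZ : IsSelfBounding Z x₀) (hZm : Measurable Z) {B : ℝ} (hZB : ∀ x, Z x ≤ B)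
    (ν : ι → Measure X) [∀ i, IsProbabilityMeasure (ν i)] (hl : 0 < l) :
    ent (Measure.pi ν) (fun x => exp (l * Z x))
      ≤ (exp (-l) - 1 + l) * ∫ x, Z x * exp (l * Z x) ∂Measure.pi ν := by
  set P := Measure.pi ν
  set F : ι → (ι → X) → ℝ := fun i x => (Z x - Z (update x i x₀)) * exp (l * Z x)
  have hZab : ∀ x, Z x ∈ Set.Icc 0 B := fun x => ⟨hZ.nonneg x, hZB x⟩
  have hexp : ∀ x, exp (l * Z x) ∈ Set.Icc 1 (exp (l * B)) := fun x =>
    ⟨one_le_exp (mul_nonneg hl.le (hZ.nonneg x)),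
      exp_le_exp.2 (mul_le_mul_of_nonneg_left (hZB x) hl.le)⟩
  have hF : ∀ i, Integrable (F i) P := fun i =>
    (integrable_comp_of_mem_Icc P (φ := fun v => exp (l * v)) (by fun_prop) hZm hZab).bdd_mul
      (c := 1) (hZm.sub (hZm.comp measurable_update_left)).aestronglyMeasurable
      (ae_of_all _ fun x => abs_le.2 ⟨by linarith [(hZ.sub_update_mem_Icc x i).1],
        (hZ.sub_update_mem_Icc x i).2⟩)
  calc ent P (fun x => exp (l * Z x))
      ≤ ∑ i, ∫ x, ent (ν i) (fun y => exp (l * Z (update x i y))) ∂P :=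
        ent_pi_le_sum ν (hZm.const_mul l).exp one_pos hexp
    _ ≤ ∑ i, ∫ x, (exp (-l) - 1 + l) * ∫ y, F i (update x i y) ∂ν i ∂P :=
        Finset.sum_le_sum fun i _ => integral_mono
          (integrable_ent_section P (ν i) ((hZm.comp measurable_update').const_mul l).exp
            fun _ => hexp _)
          ((integrable_integral_update ν i (hF i)).const_mul _) fun x => by
            simpa only [F, update_idem] using hZ.ent_exp_update_le hZm (ν i) x i hl
    _ = (exp (-l) - 1 + l) * ∫ x, (∑ i, (Z x - Z (update x i x₀))) * exp (l * Z x) ∂P := by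
        simp only [integral_const_mul, ← Finset.mul_sum, Finset.sum_mul]
        rw [integral_finsetSum _ fun i _ => hF i]
        exact congrArg _ (Finset.sum_congr rfl fun i _ => integral_integral_update ν i (hF i))
    _ ≤ (exp (-l) - 1 + l) * ∫ x, Z x * exp (l * Z x) ∂P := by
        refine mul_le_mul_of_nonneg_left (integral_mono ?_
          (integrable_comp_of_mem_Icc P (φ := fun v => v * exp (l * v)) (by fun_prop) hZm hZab)
          fun x => mul_le_mul_of_nonneg_right (hZ.sum_sub_update_le x) (exp_pos _).le) ?_
        · simpa only [Finset.sum_mul] using integrable_finsetSum _ fun i _ => hF i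
        · nlinarith [add_one_le_exp (-l)]

end IsSelfBounding

end SelfBounding

section Herbst

open Filter Topology

theorem le_exp_sub_one_mul_deriv_of_deriv_le {G : ℝ → ℝ} (hG : Differentiable ℝ G) (h0 : G 0 = 0)
    (hineq : ∀ l, 0 < l → (1 - exp (-l)) * deriv G l ≤ G l) {t : ℝ} (ht : 0 < t) :
    G t ≤ (exp t - 1) * deriv G 0 := by
  have hpos : ∀ l, 0 < l → 0 < exp l - 1 := fun l hl => sub_pos.2 (one_lt_exp_iff.2 hl)
  -- `H l = G l / (exp l - 1)` decreases on `(0, ∞)` and tends to `G'(0)` at `0⁺`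
  set H : ℝ → ℝ := fun l => G l / (exp l - 1)
  have hH : ∀ l, 0 < l →
      HasDerivAt H ((deriv G l * (exp l - 1) - G l * exp l) / (exp l - 1) ^ 2) l :=
    fun l hl => (hG l).hasDerivAt.div ((hasDerivAt_exp l).sub_const 1) (hpos l hl).ne'
  have hanti : AntitoneOn H (Set.Ioi 0) := by
    refine antitoneOn_of_deriv_nonpos (convex_Ioi 0)
      (fun l hl => (hH l hl).continuousAt.continuousWithinAt) (fun l hl => ?_) fun l hl => ?_
    all_goals rw [interior_Ioi] at hl
    · exact (hH l hl).differentiableAt.differentiableWithinAt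
    · rw [(hH l hl).deriv]
      refine div_nonpos_of_nonpos_of_nonneg ?_ (sq_nonneg _)
      have e : exp l - 1 = exp l * (1 - exp (-l)) := by rw [mul_sub, ← exp_add]; simp
      rw [e]
      nlinarith [hineq l hl, exp_pos l]
  have hlim : Tendsto H (𝓝[>] 0) (𝓝 (deriv G 0)) := by
    have h1 := (hasDerivAt_iff_tendsto_slope.1 (hG 0).hasDerivAt).mono_left (nhdsGT_le_nhdsNE 0)
    have h2 := (hasDerivAt_iff_tendsto_slope.1 ((hasDerivAt_exp 0).sub_const 1)).mono_left
      (nhdsGT_le_nhdsNE 0)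
    rw [exp_zero] at h2
    refine (div_one (deriv G 0) ▸ h1.div h2 one_ne_zero).congr'
      (eventually_nhdsWithin_of_forall fun l hl => ?_)
    have hl : (l : ℝ) ≠ 0 := ne_of_gt hl
    simp [slope_def_field, H, h0]
    field_simp
  have hHt : H t ≤ deriv G 0 := ge_of_tendsto hlim <| by
    filter_upwards [Ioc_mem_nhdsGT ht] with l hl using hanti hl.1 ht hl.2
  rwa [div_le_iff₀ (hpos t ht), mul_comm] at hHt

end Herbst

section Tail

variable {Ω : Type*} [MeasurableSpace Ω] {P : Measure Ω} [IsProbabilityMeasure P] {Z : Ω → ℝ}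
  {c d : ℝ}

lemma cgf_le_of_ent_exp_le (hZm : Measurable Z) (hZ : ∀ ω, Z ω ∈ Set.Icc c d)
    (hent : ∀ l, 0 < l →
      ent P (fun ω => exp (l * Z ω)) ≤ (exp (-l) - 1 + l) * ∫ ω, Z ω * exp (l * Z ω) ∂P)
    {t : ℝ} (ht : 0 < t) : cgf Z P t ≤ (exp t - 1) * P[Z] := by
  have hexp : ∀ l, Integrable (fun ω => exp (l * Z ω)) P := fun l =>
    integrable_comp_of_mem_Icc P (φ := fun v => exp (l * v)) (by fun_prop) hZm hZ
  have hint : ∀ l, l ∈ interior (integrableExpSet Z P) := by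
    simp [Set.eq_univ_of_forall (s := integrableExpSet Z P) hexp]
  have hderiv := deriv_cgf_zero (hint 0)
  simp only [probReal_univ, div_one] at hderiv
  rw [← hderiv]
  refine le_exp_sub_one_mul_deriv_of_deriv_le (fun l => (analyticAt_cgf (hint l)).differentiableAt)
    cgf_zero (fun l hl => ?_) ht
  have hmgf := mgf_pos (hexp l)
  have h := hent l hl
  simp only [ent, log_exp, mul_comm (exp _) (l * Z _), mul_assoc, integral_const_mul] at h
  rw [deriv_cgf (hint l), cgf, mul_div_assoc', div_le_iff₀ hmgf]
  simp only [mgf] at hmgf ⊢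
  nlinarith [h]

theorem measureReal_ge_le_of_ent_exp_le (hZm : Measurable Z) (hZ : ∀ ω, Z ω ∈ Set.Icc c d)
    (hent : ∀ l, 0 < l →
      ent P (fun ω => exp (l * Z ω)) ≤ (exp (-l) - 1 + l) * ∫ ω, Z ω * exp (l * Z ω) ∂P)
    {δ : ℝ} (hδ : 1 < δ) :
    P.real {ω | δ * P[Z] ≤ Z ω} ≤ exp (-(δ * log δ - δ + 1) * P[Z]) := by
  have hlog := log_pos hδ
  refine (measure_ge_le_exp_cgf _ hlog.le (integrable_comp_of_mem_Icc P
    (φ := fun v => exp (log δ * v)) (by fun_prop) hZm hZ)).trans (exp_le_exp.2 ?_)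
  have := cgf_le_of_ent_exp_le hZm hZ hent hlog
  rw [exp_log (by linarith)] at this
  linarith

end Tail

theorem IsSelfBounding.measureReal_ge_le {ι X : Type*} [Fintype ι] [DecidableEq ι]
    [MeasurableSpace X] {Z : (ι → X) → ℝ} {x₀ : X} (hZ : IsSelfBounding Z x₀) (hZm : Measurable Z)
    {B : ℝ} (hZB : ∀ x, Z x ≤ B) (ν : ι → Measure X) [∀ i, IsProbabilityMeasure (ν i)] {δ : ℝ}
    (hδ : 1 < δ) :
    (Measure.pi ν).real {x | δ * ∫ x, Z x ∂Measure.pi ν ≤ Z x}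
      ≤ exp (-(δ * log δ - δ + 1) * ∫ x, Z x ∂Measure.pi ν) :=
  measureReal_ge_le_of_ent_exp_le hZm (fun x => ⟨hZ.nonneg x, hZB x⟩)
    (fun _ hl => hZ.ent_exp_le hZm hZB ν hl) hδ

section Optimum

variable {E : Type*} {𝓕 : Finset (Finset E)} (h𝓕 : 𝓕.Nonempty)

lemma fopt_mono {x y : E → ℝ} (hxy : x ≤ y) : fopt 𝓕 h𝓕 x ≤ fopt 𝓕 h𝓕 y :=
  Finset.sup'_mono_fun fun _ _ => Finset.sum_le_sum fun e _ => hxy e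

lemma fopt_nonneg {x : E → ℝ} (hx : ∀ e, 0 ≤ x e) : 0 ≤ fopt 𝓕 h𝓕 x := by
  have ⟨S, hS⟩ := h𝓕
  exact (Finset.sum_nonneg fun e _ => hx e).trans (Finset.le_sup' (fun S => ∑ e ∈ S, x e) hS)

lemma fopt_div (x : E → ℝ) {c : ℝ} (hc : 0 ≤ c) :
    fopt 𝓕 h𝓕 (fun e => x e / c) = fopt 𝓕 h𝓕 x / c := by
  rw [fopt, fopt, Finset.apply_sup'_eq_sup'_comp h𝓕 (· / c)
    fun a b => (max_div_div_right hc a b).symm]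
  simp [Finset.sum_div]

lemma fopt_le_card [Fintype E] {x : E → ℝ} (hx : ∀ e, x e ≤ 1) :
    fopt 𝓕 h𝓕 x ≤ Fintype.card E :=
  Finset.sup'_le h𝓕 _ fun S _ => (Finset.sum_le_sum fun e _ => hx e).trans <| by
    simpa using Finset.card_le_univ S

lemma measurable_fopt : Measurable (fopt 𝓕 h𝓕) := by
  have : fopt 𝓕 h𝓕 = 𝓕.sup' h𝓕 fun S (x : E → ℝ) => ∑ e ∈ S, x e := by
    funext x; rw [fopt, Finset.sup'_apply]
  rw [this]
  exact Finset.measurable_sup' h𝓕 fun S _ => Finset.measurable_sum S fun e _ => measurable_pi_apply e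

lemma sum_update_zero [DecidableEq E] (S : Finset E) (x : E → ℝ) (e : E) :
    ∑ j ∈ S, update x e 0 j = ∑ j ∈ S, x j - if e ∈ S then x e else 0 := by
  split_ifs with he
  · rw [Finset.sum_update_of_mem he, ← Finset.sum_erase_add _ _ he, Finset.sdiff_singleton_eq_erase]
    ring
  · rw [Finset.sum_update_of_notMem he, sub_zero]

lemma fopt_sub_fopt_update_le [DecidableEq E] {x : E → ℝ} {S : Finset E} (hS : S ∈ 𝓕)
    (hSx : fopt 𝓕 h𝓕 x = ∑ j ∈ S, x j) (e : E) :
    fopt 𝓕 h𝓕 x - fopt 𝓕 h𝓕 (update x e 0) ≤ if e ∈ S then x e else 0 := by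
  have : ∑ j ∈ S, update x e 0 j ≤ fopt 𝓕 h𝓕 (update x e 0) :=
    Finset.le_sup' (fun S => ∑ j ∈ S, update x e 0 j) hS
  rw [sum_update_zero] at this
  linarith

theorem isSelfBounding_fopt [Fintype E] [DecidableEq E] {φ : ℝ → ℝ} (hφ0 : φ 0 = 0)
    (hφ : ∀ r, φ r ∈ Set.Icc 0 1) : IsSelfBounding (fun x : E → ℝ => fopt 𝓕 h𝓕 fun e => φ (x e)) 0 := by
  have hupd : ∀ (x : E → ℝ) i, (fun e => φ (update x i 0 e)) = update (fun e => φ (x e)) i 0 :=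
    fun x i => funext fun e => by by_cases he : e = i <;> simp [he, hφ0]
  have hmax : ∀ x : E → ℝ, ∃ S ∈ 𝓕, fopt 𝓕 h𝓕 (fun e => φ (x e)) = ∑ j ∈ S, φ (x j) :=
    fun x => Finset.exists_mem_eq_sup' h𝓕 _
  refine ⟨fun x i => ?_, fun x i => ?_, fun x => ?_⟩
  · rw [hupd]
    refine fopt_mono h𝓕 fun e => ?_
    by_cases he : e = i
    · subst he; simpa using (hφ (x e)).1
    · simp [he]
  · obtain ⟨S, hS, hSx⟩ := hmax x
    have := fopt_sub_fopt_update_le h𝓕 hS hSx i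
    rw [hupd]
    split_ifs at this <;> linarith [(hφ (x i)).2]
  · obtain ⟨S, hS, hSx⟩ := hmax x
    calc ∑ i, (fopt 𝓕 h𝓕 (fun e => φ (x e)) - fopt 𝓕 h𝓕 (fun e => φ (update x i 0 e)))
        ≤ ∑ i, if i ∈ S then φ (x i) else 0 := Finset.sum_le_sum fun i _ => by
          rw [hupd]; exact fopt_sub_fopt_update_le h𝓕 hS hSx i
      _ = fopt 𝓕 h𝓕 (fun e => φ (x e)) := by rw [Finset.sum_ite_mem, Finset.univ_inter, hSx]

end Optimum

lemma exp_neg_mul_le_div {δ k α c m : ℝ} (hδ : 1 < δ) (hk : 0 < k) (hα : 0 < α)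
    (hc : (4 + 2 * δ) / (3 * (δ - 1) ^ 2) * log (k / α) ≤ c) (hcm : c < m) (hm : 0 ≤ m) :
    exp (-(δ * log δ - δ + 1) * m) ≤ α / k := by
  have hr : 0 < 3 * (δ - 1) ^ 2 / (4 + 2 * δ) := by
    have : 0 < δ - 1 := by linarith
    positivity
  have hlog : log (k / α) ≤ 3 * (δ - 1) ^ 2 / (4 + 2 * δ) * c := by
    rwa [← one_div_div, div_mul_eq_mul_div, one_mul, div_le_iff₀' hr] at hc
  have := mul_le_mul_of_nonneg_right (div_le_mul_log_sub_add_one hδ.le) hm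
  calc exp (-(δ * log δ - δ + 1) * m) ≤ exp (-log (k / α)) := exp_le_exp.2 (by nlinarith)
    _ = α / k := by rw [exp_neg, exp_log (div_pos hk hα), inv_div]

theorem measureReal_fopt_ge_le {Ω : Type*} [MeasurableSpace Ω] (μ : Measure Ω)
    [IsProbabilityMeasure μ] {E : Type*} [Fintype E] {𝓕 : Finset (Finset E)} (h𝓕 : 𝓕.Nonempty)
    {τ : ℝ} (hτ : 0 < τ) {w : E → Ω → ℝ} (hmeas : ∀ e, Measurable (w e)) (hindep : iIndepFun w μ)
    (hbd : ∀ e, ∀ᵐ ω ∂μ, w e ω ∈ Set.Icc 0 τ) {δ : ℝ} (hδ : 1 < δ) :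
    μ.real {ω | δ * ∫ ω, fopt 𝓕 h𝓕 (fun e => w e ω) ∂μ ≤ fopt 𝓕 h𝓕 (fun e => w e ω)}
      ≤ exp (-(δ * log δ - δ + 1) * ((∫ ω, fopt 𝓕 h𝓕 (fun e => w e ω) ∂μ) / τ)) := by
  classical
  -- clamping makes `Z` self-bounding on all of `E → ℝ`, and `τ * Z (w ω) = f (w ω)` a.s.
  set φ : ℝ → ℝ := fun r => max 0 (min r τ) / τ
  have hφ : ∀ r, φ r ∈ Set.Icc 0 1 := fun r =>
    ⟨by positivity, (div_le_one hτ).2 (max_le hτ.le (min_le_right _ _))⟩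
  set Z : (E → ℝ) → ℝ := fun x => fopt 𝓕 h𝓕 fun e => φ (x e)
  have hZ : IsSelfBounding Z 0 := isSelfBounding_fopt h𝓕 (by simp [φ, hτ.le]) hφ
  have hZm : Measurable Z := (measurable_fopt h𝓕).comp <| measurable_pi_lambda _ fun e =>
    ((measurable_const.max (measurable_id.min measurable_const)).div_const τ).comp
      (measurable_pi_apply e)
  set V : Ω → E → ℝ := fun ω e => w e ω
  have hV : Measurable V := measurable_pi_lambda _ hmeas
  set ν := fun e => μ.map (w e)
  have : ∀ e, IsProbabilityMeasure (ν e) := fun e =>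
    Measure.isProbabilityMeasure_map (hmeas e).aemeasurable
  have hlaw : μ.map V = Measure.pi ν :=
    (iIndepFun_iff_map_fun_eq_pi_map fun e => (hmeas e).aemeasurable).1 hindep
  have hZV : ∀ᵐ ω ∂μ, fopt 𝓕 h𝓕 (V ω) = τ * Z (V ω) := by
    filter_upwards [ae_all_iff.2 hbd] with ω hω
    have hφV : (fun e => φ (V ω e)) = fun e => V ω e / τ := funext fun e => by
      simp only [φ, V, min_eq_left (hω e).2, max_eq_right (hω e).1]
    simp only [Z, hφV, fopt_div h𝓕 _ hτ.le, mul_div_cancel₀ _ hτ.ne']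
  set m := ∫ x, Z x ∂Measure.pi ν
  have hint : ∫ ω, fopt 𝓕 h𝓕 (V ω) ∂μ = τ * m := by
    rw [integral_congr_ae hZV, integral_const_mul,
      ← integral_map hV.aemeasurable (hlaw ▸ hZm.aestronglyMeasurable), hlaw]
  have hevent : μ {ω | δ * ∫ ω, fopt 𝓕 h𝓕 (V ω) ∂μ ≤ fopt 𝓕 h𝓕 (V ω)}
      = Measure.pi ν {x | δ * m ≤ Z x} := by
    rw [← hlaw, Measure.map_apply hV (measurableSet_le measurable_const hZm)]
    refine measure_congr (hZV.mono fun ω hω => propext ?_)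
    change δ * _ ≤ _ ↔ δ * m ≤ Z (V ω)
    rw [hint, hω, mul_left_comm, mul_le_mul_iff_right₀ hτ]
  rw [measureReal_def, hevent, hint, mul_div_cancel_left₀ _ hτ.ne']
  exact hZ.measureReal_ge_le hZm (fun x => fopt_le_card h𝓕 fun e => (hφ _).2) ν hδ

theorem blm_opt_tail_general
    {Ω : Type*} [MeasurableSpace Ω] (μ : Measure Ω) [IsProbabilityMeasure μ]
    {E : Type*} [Fintype E]
    (𝓕 : Finset (Finset E)) (h𝓕 : 𝓕.Nonempty)
    (τ : ℝ) (hτ : 0 < τ)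
    (w : E → Ω → ℝ) (hmeas : ∀ e, Measurable (w e))
    (hindep : iIndepFun w μ)
    (hbd : ∀ e, ∀ᵐ ω ∂μ, w e ω ∈ Set.Icc 0 τ)
    (W : ℝ) (hW : W = ∫ ω, fopt 𝓕 h𝓕 (fun e => w e ω) ∂μ)
    (δ k α c : ℝ) (hδ : 1 < δ) (hk : 1 ≤ k) (hα : α ∈ Set.Ioc (0 : ℝ) 1)
    (hc : ((4 + 2 * δ) / (3 * (δ - 1) ^ 2)) * Real.log (k / α) ≤ c)
    (hWc : c * τ < W) :
    (μ {ω | δ * W < fopt 𝓕 h𝓕 (fun e => w e ω)}).toReal ≤ α / k := by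
  subst hW
  have hW0 : 0 ≤ ∫ ω, fopt 𝓕 h𝓕 (fun e => w e ω) ∂μ := integral_nonneg_of_ae <|
    (ae_all_iff.2 hbd).mono fun ω hω => fopt_nonneg h𝓕 fun e => (hω e).1
  calc (μ {ω | δ * _ < fopt 𝓕 h𝓕 (fun e => w e ω)}).toReal
      ≤ μ.real {ω | δ * ∫ ω, fopt 𝓕 h𝓕 (fun e => w e ω) ∂μ ≤ fopt 𝓕 h𝓕 (fun e => w e ω)} :=
        measureReal_mono (Set.ofPred_subset_ofPred.2 fun _ => le_of_lt)
    _ ≤ exp (-(δ * log δ - δ + 1) * ((∫ ω, fopt 𝓕 h𝓕 (fun e => w e ω) ∂μ) / τ)) :=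
        measureReal_fopt_ge_le μ h𝓕 hτ hmeas hindep hbd hδ
    _ ≤ α / k := exp_neg_mul_le_div hδ (by linarith) hα.1 hc ((lt_div_iff₀ hτ).2 hWc)
        (div_nonneg hW0 hτ.le)

/-- Let `τ > 0`, `(w_e)` mutually independent with `w_e ∈ [0,τ]` a.s.,
`W := E[f(w)]`. Let `δ > 1`, `k ≥ 1`, `α ∈ (0,1]`, and
`c ≥ ((4 + 2δ)/(3(δ − 1)²)) · log(k/α)`. If `W > c·τ`, then `P[f(w) > δW] ≤ α/k`. -/
theorem blm_opt_tail
    {Ω : Type*} [MeasurableSpace Ω] (μ : Measure Ω) [IsProbabilityMeasure μ]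
    {E : Type*} [Fintype E] [Nonempty E]
    (𝓕 : Finset (Finset E)) (h𝓕 : 𝓕.Nonempty)
    (hdc : ∀ S ∈ 𝓕, ∀ T ⊆ S, T ∈ 𝓕)
    (τ : ℝ) (hτ : 0 < τ)
    (w : E → Ω → ℝ) (hmeas : ∀ e, Measurable (w e))
    (hindep : iIndepFun w μ)
    (hbd : ∀ e, ∀ᵐ ω ∂μ, w e ω ∈ Set.Icc 0 τ)
    (W : ℝ) (hW : W = ∫ ω, fopt 𝓕 h𝓕 (fun e => w e ω) ∂μ)
    (δ k α c : ℝ) (hδ : 1 < δ) (hk : 1 ≤ k) (hα : α ∈ Set.Ioc (0 : ℝ) 1)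
    (hc : ((4 + 2 * δ) / (3 * (δ - 1) ^ 2)) * Real.log (k / α) ≤ c)
    (hWc : c * τ < W) :
    (μ {ω | δ * W < fopt 𝓕 h𝓕 (fun e => w e ω)}).toReal ≤ α / k :=
  blm_opt_tail_general μ 𝓕 h𝓕 τ hτ w hmeas hindep hbd W hW δ k α c hδ hk hα hc hWc
end

section
/- Let a and F be random variables on a probability space with 0 ≤ a ≤ F almost surely, F > 0 almost surely, and F integrable, and set V := E[F]. Let α ∈ (0,1]. If E[a/F] ≥ α and P[F ≤ V/4] ≤ α/2, then E[a] ≥ (α/16) · V. -/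
/-!
Truncate at the level `c = V / 4`: where `F > c` one has `c * (a / F) ≤ a`, and elsewhere
`c * (a / F) ≤ c` because `a / F ≤ 1`. Integrating, `c * E[a / F] ≤ E[a] + c * P[F ≤ c]`, so
`E[a] ≥ (V / 4) * (α - α / 2) = α V / 8`.
-/

open MeasureTheory

lemma mul_div_le_add_ite {x y c : ℝ} (hx : 0 ≤ x) (hxy : x ≤ y) (hy : 0 < y) :
    c * (x / y) ≤ x + if y ≤ c then c else 0 := by
  have hq0 : 0 ≤ x / y := div_nonneg hx hy.le
  have hq1 : x / y ≤ 1 := (div_le_one hy).mpr hxy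
  split_ifs with hyc
  · nlinarith
  · calc c * (x / y) ≤ y * (x / y) := by gcongr; linarith
      _ = x := mul_div_cancel₀ x hy.ne'
      _ ≤ x + 0 := by simp

lemma mul_integral_div_le_integral_add {Ω : Type*} [MeasurableSpace Ω] {μ : Measure Ω}
    [IsFiniteMeasure μ] {a F : Ω → ℝ} (hann : ∀ᵐ ω ∂μ, 0 ≤ a ω) (haF : ∀ᵐ ω ∂μ, a ω ≤ F ω)
    (hFpos : ∀ᵐ ω ∂μ, 0 < F ω) (hFint : Integrable F μ) {c : ℝ} (hc : 0 ≤ c) :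
    c * ∫ ω, a ω / F ω ∂μ ≤ ∫ ω, a ω ∂μ + c * μ.real {ω | F ω ≤ c} := by
  by_cases hg : Integrable (fun ω => a ω / F ω) μ
  swap
  · rw [integral_undef hg, mul_zero]
    have := integral_nonneg_of_ae hann
    positivity
  have ha_eq : a =ᵐ[μ] fun ω => a ω / F ω * F ω := by
    filter_upwards [hFpos] with ω hω
    rw [div_mul_cancel₀ _ hω.ne']
  have ha : Integrable a μ := by
    refine hFint.mono' ((hg.aestronglyMeasurable.mul hFint.aestronglyMeasurable).congr
      ha_eq.symm) ?_
    filter_upwards [hann, haF] with ω h0 h1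
    rwa [Real.norm_eq_abs, abs_of_nonneg h0]
  have hS : NullMeasurableSet {ω | F ω ≤ c} μ :=
    nullMeasurableSet_le hFint.aemeasurable aemeasurable_const
  have hind : Integrable ({ω | F ω ≤ c}.indicator fun _ => c) μ :=
    (integrable_const c).indicator₀ hS
  calc c * ∫ ω, a ω / F ω ∂μ = ∫ ω, c * (a ω / F ω) ∂μ := (integral_const_mul c _).symm
    _ ≤ ∫ ω, a ω + {ω | F ω ≤ c}.indicator (fun _ => c) ω ∂μ := by
      refine integral_mono_ae (hg.const_mul c) (ha.add hind) ?_
      filter_upwards [hann, haF, hFpos] with ω h0 h1 h2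
      simpa only [Set.indicator_apply, Set.mem_ofPred_eq] using mul_div_le_add_ite h0 h1 h2
    _ = ∫ ω, a ω ∂μ + c * μ.real {ω | F ω ≤ c} := by
      rw [integral_add ha hind, integral_indicator₀ hS, setIntegral_const, smul_eq_mul,
        mul_comm]

theorem eor_to_roe_core_general
    {Ω : Type*} [MeasurableSpace Ω] (μ : Measure Ω) [IsProbabilityMeasure μ]
    (a F : Ω → ℝ)
    (hann : ∀ᵐ ω ∂μ, 0 ≤ a ω) (haF : ∀ᵐ ω ∂μ, a ω ≤ F ω)
    (hFpos : ∀ᵐ ω ∂μ, 0 < F ω) (hFint : Integrable F μ)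
    (V : ℝ) (hV : V = ∫ ω, F ω ∂μ)
    (α : ℝ)
    (hratio : α ≤ ∫ ω, a ω / F ω ∂μ)
    (htail : (μ {ω | F ω ≤ V / 4}).toReal ≤ α / 2) :
    (α / 16) * V ≤ ∫ ω, a ω ∂μ := by
  have hα : 0 ≤ α := by linarith [ENNReal.toReal_nonneg (a := μ {ω | F ω ≤ V / 4})]
  have hV0 : 0 ≤ V := hV ▸ integral_nonneg_of_ae (hFpos.mono fun _ h => h.le)
  have hc : 0 ≤ V / 4 := by positivity
  have htrunc := mul_integral_div_le_integral_add hann haF hFpos hFint hc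
  have hlow : V / 4 * α ≤ V / 4 * ∫ ω, a ω / F ω ∂μ := mul_le_mul_of_nonneg_left hratio hc
  have htail' : V / 4 * μ.real {ω | F ω ≤ V / 4} ≤ V / 4 * (α / 2) :=
    mul_le_mul_of_nonneg_left htail hc
  linarith [mul_nonneg hα hV0]

/-- Let `a, F` be random variables with `0 ≤ a ≤ F` a.s., `F > 0` a.s.,
`F` integrable, and `V := E[F]`. Let `α ∈ (0,1]`. If `E[a/F] ≥ α` and `P[F ≤ V/4] ≤ α/2`,
then `E[a] ≥ (α/16)·V`. -/
theorem eor_to_roe_core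
    {Ω : Type*} [MeasurableSpace Ω] (μ : Measure Ω) [IsProbabilityMeasure μ]
    (a F : Ω → ℝ)
    (hann : ∀ᵐ ω ∂μ, 0 ≤ a ω) (haF : ∀ᵐ ω ∂μ, a ω ≤ F ω)
    (hFpos : ∀ᵐ ω ∂μ, 0 < F ω) (hFint : Integrable F μ)
    (V : ℝ) (hV : V = ∫ ω, F ω ∂μ)
    (α : ℝ) (hα : α ∈ Set.Ioc (0 : ℝ) 1)
    (hratio : α ≤ ∫ ω, a ω / F ω ∂μ)
    (htail : (μ {ω | F ω ≤ V / 4}).toReal ≤ α / 2) :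
    (α / 16) * V ≤ ∫ ω, a ω ∂μ :=
  eor_to_roe_core_general μ a F hann haF hFpos hFint V hV α hratio htail
end

section
/- Suppose M > 0. For every τ > 0, the function w ↦ f(w)/(τ·M) restricted to the domain [0,τ]^E is self-bounding: there exist functions g_e, each depending only on the coordinates other than e (one may take g_e(w^{(e)}) = f(w with w_e replaced by 0)/(τ·M)), such that for every w ∈ [0,τ]^E and every e ∈ E, 0 ≤ f(w)/(τM) − g_e(w^{(e)}) ≤ 1, and Σ_{e∈E} (f(w)/(τM) − g_e(w^{(e)})) ≤ f(w)/(τM). -/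
open Finset

/-- The extended-XOS optimum function
`f(w) = max_{i∈[ℓ]} max_{S∈𝓕} Σ_{j∈S} a_{ij} w_j`. -/
noncomputable def fxos {E : Type*} {ℓ : ℕ} (hℓ : 0 < ℓ)
    (𝓕 : Finset (Finset E)) (h𝓕 : 𝓕.Nonempty)
    (a : Fin ℓ → E → ℝ) (w : E → ℝ) : ℝ :=
  (Finset.univ : Finset (Fin ℓ)).sup'
    (Finset.univ_nonempty_iff.mpr (Fin.pos_iff_nonempty.mp hℓ))
    (fun i => 𝓕.sup' h𝓕 (fun S => ∑ j ∈ S, a i j * w j))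

/-- Suppose `M = max_{i,j} a_{ij} > 0`. For every `τ > 0`, the function
`w ↦ f(w)/(τM)` restricted to `[0,τ]^E` is self-bounding, witnessed by
`g_e(w^{(e)}) = f(w with w_e replaced by 0)/(τM)`: for every `w ∈ [0,τ]^E` and every `e`,
`0 ≤ f(w)/(τM) − f(update w e 0)/(τM) ≤ 1`, and
`Σ_e (f(w)/(τM) − f(update w e 0)/(τM)) ≤ f(w)/(τM)`. -/
theorem fxos_self_bounding {E : Type*} [Fintype E] [Nonempty E] [DecidableEq E]
    {ℓ : ℕ} (hℓ : 0 < ℓ)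
    (𝓕 : Finset (Finset E)) (h𝓕 : 𝓕.Nonempty)
    (hdc : ∀ S ∈ 𝓕, ∀ T ⊆ S, T ∈ 𝓕)
    (a : Fin ℓ → E → ℝ) (hann : ∀ i j, 0 ≤ a i j)
    (M : ℝ)
    (hM : M = (Finset.univ : Finset (Fin ℓ)).sup'
      (Finset.univ_nonempty_iff.mpr (Fin.pos_iff_nonempty.mp hℓ))
      (fun i => Finset.univ.sup' Finset.univ_nonempty (fun j => a i j)))
    (hMpos : 0 < M)
    (τ : ℝ) (hτ : 0 < τ)
    (w : E → ℝ) (hw : ∀ e, w e ∈ Set.Icc 0 τ) :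
    (∀ e : E,
        0 ≤ fxos hℓ 𝓕 h𝓕 a w / (τ * M)
              - fxos hℓ 𝓕 h𝓕 a (Function.update w e 0) / (τ * M) ∧
        fxos hℓ 𝓕 h𝓕 a w / (τ * M)
              - fxos hℓ 𝓕 h𝓕 a (Function.update w e 0) / (τ * M) ≤ 1) ∧
    ∑ e : E, (fxos hℓ 𝓕 h𝓕 a w / (τ * M)
              - fxos hℓ 𝓕 h𝓕 a (Function.update w e 0) / (τ * M))
      ≤ fxos hℓ 𝓕 h𝓕 a w / (τ * M) := by
  have hτM : (0:ℝ) < τ * M := mul_pos hτ hMpos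
  have huniv : (Finset.univ : Finset (Fin ℓ)).Nonempty :=
    Finset.univ_nonempty_iff.mpr (Fin.pos_iff_nonempty.mp hℓ)
  -- general lower bound on fxos
  have key : ∀ (v : E → ℝ) (i : Fin ℓ) (S : Finset E), S ∈ 𝓕 →
      (∑ j ∈ S, a i j * v j) ≤ fxos hℓ 𝓕 h𝓕 a v := by
    intro v i S hS
    exact le_trans (Finset.le_sup' (fun S => ∑ j ∈ S, a i j * v j) hS)
      (Finset.le_sup' (fun i => 𝓕.sup' h𝓕 (fun S => ∑ j ∈ S, a i j * v j)) (Finset.mem_univ i))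
  -- monotonicity: update to 0 decreases
  have hmono : ∀ e, fxos hℓ 𝓕 h𝓕 a (Function.update w e 0) ≤ fxos hℓ 𝓕 h𝓕 a w := by
    intro e
    apply Finset.sup'_le
    intro i _
    apply Finset.sup'_le
    intro S hS
    refine le_trans (Finset.sum_le_sum ?_) (key w i S hS)
    intro j _
    rcases eq_or_ne j e with rfl | hje
    · simp [Function.update_self]
      exact mul_nonneg (hann i j) (hw j).1
    · rw [Function.update_of_ne hje]
  -- achiever
  obtain ⟨i, -, hi⟩ := Finset.exists_mem_eq_sup' huniv
    (fun i => 𝓕.sup' h𝓕 (fun S => ∑ j ∈ S, a i j * w j))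
  obtain ⟨S, hS, hSeq⟩ := Finset.exists_mem_eq_sup' h𝓕
    (fun S => ∑ j ∈ S, a i j * w j)
  have hfw : fxos hℓ 𝓕 h𝓕 a w = ∑ j ∈ S, a i j * w j := by
    rw [fxos, hi, hSeq]
  -- erase bound
  have herase : ∀ e, (∑ j ∈ S.erase e, a i j * w j) ≤ fxos hℓ 𝓕 h𝓕 a (Function.update w e 0) := by
    intro e
    have hSe : S.erase e ∈ 𝓕 := hdc S hS _ (Finset.erase_subset e S)
    refine le_trans (le_of_eq ?_) (key (Function.update w e 0) i _ hSe)
    apply Finset.sum_congr rfl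
    intro j hj
    rw [Function.update_of_ne (Finset.ne_of_mem_erase hj)]
  -- per-coordinate difference bound by indicator
  have hdiff : ∀ e, fxos hℓ 𝓕 h𝓕 a w - fxos hℓ 𝓕 h𝓕 a (Function.update w e 0)
      ≤ (if e ∈ S then a i e * w e else 0) := by
    intro e
    by_cases he : e ∈ S
    · have : fxos hℓ 𝓕 h𝓕 a w = (∑ j ∈ S.erase e, a i j * w j) + a i e * w e := by
        rw [hfw, Finset.sum_erase_add S _ he]
      rw [if_pos he, this]
      have := herase e
      linarith
    · have : fxos hℓ 𝓕 h𝓕 a w = ∑ j ∈ S.erase e, a i j * w j := by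
        rw [hfw, Finset.erase_eq_of_notMem he]
      rw [if_neg he, this]
      have := herase e
      linarith
  have hMub : ∀ j, a i j ≤ M := by
    intro j
    rw [hM]
    exact le_trans (Finset.le_sup' (fun j => a i j) (Finset.mem_univ j))
      (Finset.le_sup' (fun i => Finset.univ.sup' Finset.univ_nonempty (fun j => a i j))
        (Finset.mem_univ i))
  constructor
  · intro e
    constructor
    · linarith [(div_le_div_iff_of_pos_right hτM).mpr (hmono e)]
    · rw [div_sub_div_same, div_le_one hτM]
      refine le_trans (hdiff e) ?_
      by_cases he : e ∈ S
      · rw [if_pos he]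
        calc a i e * w e ≤ M * τ :=
              mul_le_mul (hMub e) (hw e).2 (hw e).1 hMpos.le
          _ = τ * M := mul_comm _ _
      · rw [if_neg he]; positivity
  · have hsum : ∑ e : E, (fxos hℓ 𝓕 h𝓕 a w - fxos hℓ 𝓕 h𝓕 a (Function.update w e 0))
        ≤ fxos hℓ 𝓕 h𝓕 a w := by
      refine le_trans (Finset.sum_le_sum (fun e _ => hdiff e)) ?_
      rw [Finset.sum_ite_mem, Finset.univ_inter, hfw]
    calc ∑ e : E, (fxos hℓ 𝓕 h𝓕 a w / (τ * M)
            - fxos hℓ 𝓕 h𝓕 a (Function.update w e 0) / (τ * M))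
        = (∑ e : E, (fxos hℓ 𝓕 h𝓕 a w - fxos hℓ 𝓕 h𝓕 a (Function.update w e 0))) / (τ * M) := by
          rw [Finset.sum_div]
          exact Finset.sum_congr rfl (fun e _ => (sub_div _ _ _).symm)
      _ ≤ fxos hℓ 𝓕 h𝓕 a w / (τ * M) := (div_le_div_iff_of_pos_right hτM).mpr hsum
end
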